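/- arXiv:2502.13381 — 8 statements merged into one kernel-verified Lean document; each statement's English description precedes it below -/
import Mathlib

section
/- For all real s in (0, 1/4], the inequality e^{s/2}(e^{s/2}-1)(1+s/2)^2/s - (e^s - 1)(1+s)^2/(2s) ≤ -3s/8 holds. -/
/-! With `a = exp (s/2)` the left-hand side factors as `(a - 1) (a - 1 - 2s - s² - a s²/2) / (2s)`.
Since `s/2 ≤ a - 1 ≤ s/2 + s²/4`, the first factor is at least `s/2` and the second at most `-3s/2`. -/

open Real

lemma Real.exp_sub_one_le_add_sq {t : ℝ} (ht : |t| ≤ 1) : exp t - 1 ≤ t + t^2 := by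
  linarith [(abs_le.1 (abs_exp_sub_one_sub_id_le ht)).2]

lemma halfstep_error_eq (a s : ℝ) (hs : s ≠ 0) :
    a * (a - 1) * (1 + s/2)^2 / s - (a^2 - 1) * (1 + s)^2 / (2*s)
      = (a - 1) * (a - 1 - 2*s - s^2 - a*s^2/2) / (2*s) := by
  field_simp
  ring

lemma halfstep_error_numerator_le {a s : ℝ} (hs : 0 ≤ s) (hlo : s/2 ≤ a - 1)
    (hhi : a - 1 ≤ s/2 + (s/2)^2) :
    (a - 1) * (a - 1 - 2*s - s^2 - a*s^2/2) ≤ -(3*s^2/4) := by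
  have hsecond : a - 1 - 2*s - s^2 - a*s^2/2 ≤ -(3*s/2) := by nlinarith
  calc (a - 1) * (a - 1 - 2*s - s^2 - a*s^2/2) ≤ (a - 1) * -(3*s/2) :=
        mul_le_mul_of_nonneg_left hsecond (by linarith)
    _ ≤ (s/2) * -(3*s/2) := mul_le_mul_of_nonpos_right hlo (by linarith)
    _ = -(3*s^2/4) := by ring

theorem exp_halfstep_inequality (s : ℝ) (hs : 0 < s) (hs' : s ≤ 1/4) :
    Real.exp (s/2) * (Real.exp (s/2) - 1) * (1 + s/2)^2 / s
      - (Real.exp s - 1) * (1 + s)^2 / (2*s) ≤ -(3*s/8) := by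
  have hsq : exp s = exp (s/2) ^ 2 := by rw [← exp_nat_mul]; ring_nf
  have hlo : s/2 ≤ exp (s/2) - 1 := by linarith [add_one_le_exp (s/2)]
  have hhi : exp (s/2) - 1 ≤ s/2 + (s/2)^2 :=
    exp_sub_one_le_add_sq (by rw [abs_of_pos (by positivity)]; linarith)
  rw [hsq, halfstep_error_eq _ _ hs.ne', div_le_iff₀ (by positivity)]
  linarith [halfstep_error_numerator_le hs.le hlo hhi]
end

section
/- Let M ∈ K(ℝ^d) be nonempty compact, and let α, ρ > 0 with α ≥ ρ/2. Then π^α_ρ(M) := B_α(M) ∩ (ρℤ)^d is nonempty, where B_α(M) is the closed ∞-norm α-neighborhood of M. Moreover, if M is path-connected, then π^α_ρ(M) is chain-connected in the grid ρℤ^d, i.e., for any x, z ∈ π^α_ρ(M) there exists a finite sequence y_0 = x, y_1, ..., y_n = z in π^α_ρ(M) with ‖y_{k+1} − y_k‖_∞ = ρ for all k. -/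
/-- The grid Δ_ρ = ρℤ^d. -/
def grid (d : ℕ) (ρ : ℝ) : Set (Fin d → ℝ) := {x | ∀ i, ∃ k : ℤ, x i = ρ * k}

/-- Closed α-neighborhood of a set in the ∞-norm (the sup metric on `Fin d → ℝ`). -/
def nbhd {d : ℕ} (α : ℝ) (M : Set (Fin d → ℝ)) : Set (Fin d → ℝ) :=
  {y | ∃ x ∈ M, dist y x ≤ α}

/-- Chain-connectedness with step ρ: any two points are joined by a finite chain in the set
with consecutive ∞-distances exactly ρ. -/
def ChainConnected (d : ℕ) (ρ : ℝ) (M : Set (Fin d → ℝ)) : Prop :=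
  ∀ x ∈ M, ∀ z ∈ M, ∃ (n : ℕ) (y : ℕ → (Fin d → ℝ)), y 0 = x ∧ y n = z ∧
    (∀ k ≤ n, y k ∈ M) ∧ ∀ k < n, dist (y (k+1)) (y k) = ρ

/-- Auxiliary: `x` is joined to `z` by a chain in `S`. -/
def ChainTo (d : ℕ) (ρ : ℝ) (S : Set (Fin d → ℝ)) (x z : Fin d → ℝ) : Prop :=
  ∃ (n : ℕ) (y : ℕ → (Fin d → ℝ)), y 0 = x ∧ y n = z ∧
    (∀ k ≤ n, y k ∈ S) ∧ ∀ k < n, dist (y (k+1)) (y k) = ρ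

lemma chainTo_refl {d : ℕ} {ρ : ℝ} {S : Set (Fin d → ℝ)} {x : Fin d → ℝ} (hx : x ∈ S) :
    ChainTo d ρ S x x :=
  ⟨0, fun _ => x, rfl, rfl, fun _ _ => hx, fun k hk => absurd hk (by omega)⟩

lemma chainTo_trans {d : ℕ} {ρ : ℝ} {S : Set (Fin d → ℝ)} {x w z : Fin d → ℝ}
    (h1 : ChainTo d ρ S x w) (h2 : ChainTo d ρ S w z) : ChainTo d ρ S x z := by
  obtain ⟨n1, y1, hy10, hy1n, hy1mem, hy1step⟩ := h1
  obtain ⟨n2, y2, hy20, hy2n, hy2mem, hy2step⟩ := h2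
  have key : ∀ j, n1 ≤ j → (if j ≤ n1 then y1 j else y2 (j - n1)) = y2 (j - n1) := by
    intro j hj
    by_cases h : j ≤ n1
    · have hje : j = n1 := le_antisymm h hj
      subst hje
      simp [hy1n, ← hy20]
    · simp [h]
  refine ⟨n1 + n2, fun k => if k ≤ n1 then y1 k else y2 (k - n1), by simp [hy10], ?_, ?_, ?_⟩
  · show (if n1 + n2 ≤ n1 then y1 (n1 + n2) else y2 (n1 + n2 - n1)) = z
    rw [key (n1 + n2) (by omega)]
    simpa using hy2n
  · intro k hk
    by_cases h : k ≤ n1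
    · simp only [h, if_true]; exact hy1mem k h
    · simp only [h, if_false]; exact hy2mem (k - n1) (by omega)
  · intro k hk
    rcases Nat.lt_or_ge k n1 with h | h
    · simp only [show k + 1 ≤ n1 by omega, show k ≤ n1 by omega, if_true]
      exact hy1step k h
    · show dist (if k + 1 ≤ n1 then y1 (k + 1) else y2 (k + 1 - n1))
          (if k ≤ n1 then y1 k else y2 (k - n1)) = ρ
      rw [key (k+1) (by omega), key k h]
      have he : k + 1 - n1 = (k - n1) + 1 := by omega
      rw [he]
      exact hy2step (k - n1) (by omega)

/-- One grid step (or zero): if all coordinates differ by `ρ` times an integer of absolute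
value at most 1, we get a chain. -/
lemma chainTo_step {d : ℕ} {ρ : ℝ} {S : Set (Fin d → ℝ)} {x z : Fin d → ℝ}
    (hρ : 0 < ρ) (hx : x ∈ S) (hz : z ∈ S)
    (h : ∀ i, ∃ e : ℤ, z i - x i = ρ * e ∧ |e| ≤ 1) : ChainTo d ρ S x z := by
  by_cases hxz : x = z
  · subst hxz; exact chainTo_refl hx
  · refine ⟨1, fun k => if k = 0 then x else z, by simp, by simp, ?_, ?_⟩
    · intro k _; by_cases h0 : k = 0 <;> simp [h0, hx, hz]
    · intro k hk
      have hk0 : k = 0 := by omega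
      subst hk0
      show dist z x = ρ
      refine le_antisymm ?_ ?_
      · rw [dist_pi_le_iff hρ.le]
        intro i
        obtain ⟨e, he, habs⟩ := h i
        rw [Real.dist_eq, he, abs_mul, abs_of_pos hρ]
        have h1 : |(e : ℝ)| ≤ 1 := by exact_mod_cast habs
        nlinarith [abs_nonneg (e:ℝ)]
      · obtain ⟨i, hi⟩ := Function.ne_iff.mp hxz
        obtain ⟨e, he, habs⟩ := h i
        have he0 : e ≠ 0 := by
          intro h0; apply hi; rw [h0] at he; push_cast at he
          linarith [sub_eq_zero.mp (by linarith : z i - x i = 0)]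
        have habs1 : |e| = 1 := le_antisymm habs (Int.one_le_abs he0)
        have hd : dist (z i) (x i) = ρ := by
          rw [Real.dist_eq, he, abs_mul, abs_of_pos hρ, ← Int.cast_abs, habs1]
          norm_num
        calc ρ = dist (z i) (x i) := hd.symm
          _ ≤ _ := dist_le_pi_dist z x i

lemma int_between (j : ℤ) (hj : 0 ≤ j) (dd : ℤ) :
    min 0 dd ≤ dd.sign * min j |dd| ∧ dd.sign * min j |dd| ≤ max 0 dd := by
  rcases lt_trichotomy dd 0 with h | h | h
  · rw [Int.sign_eq_neg_one_of_neg h, abs_of_neg h]; omega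
  · simp [h]
  · rw [Int.sign_eq_one_of_pos h, abs_of_pos h]; omega

lemma between_abs {a b t p : ℝ} (h1 : min a b ≤ t) (h2 : t ≤ max a b) :
    |t - p| ≤ max (|a - p|) (|b - p|) := by
  rw [abs_sub_le_iff]
  constructor
  · calc t - p ≤ max a b - p := by linarith
      _ ≤ max (a - p) (b - p) := by
          rcases le_total a b with h | h
          · rw [max_eq_right h]; exact le_max_right _ _
          · rw [max_eq_left h]; exact le_max_left _ _
      _ ≤ max (|a - p|) (|b - p|) := max_le_max (le_abs_self _) (le_abs_self _)
  · calc p - t ≤ p - min a b := by linarith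
      _ ≤ max (p - a) (p - b) := by
          rcases le_total a b with h | h
          · rw [min_eq_left h]; exact le_max_left _ _
          · rw [min_eq_right h]; exact le_max_right _ _
      _ ≤ max (|a - p|) (|b - p|) := by
          refine max_le_max ?_ ?_ <;> rw [abs_sub_comm] <;> exact le_abs_self _

/-- Two grid points within `α` of a common anchor `p ∈ M` are chain-connected
inside `nbhd α M ∩ grid d ρ`. -/
lemma chainTo_anchor {d : ℕ} {ρ α : ℝ} {M : Set (Fin d → ℝ)} {p x z : Fin d → ℝ}
    (hρ : 0 < ρ) (hp : p ∈ M) (hxg : x ∈ grid d ρ) (hzg : z ∈ grid d ρ)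
    (hxp : dist x p ≤ α) (hzp : dist z p ≤ α) :
    ChainTo d ρ (nbhd α M ∩ grid d ρ) x z := by
  have hα0 : 0 ≤ α := le_trans dist_nonneg hxp
  choose k hk using hxg
  choose m hm using hzg
  set c : ℕ → Fin d → ℤ := fun j i => k i + (m i - k i).sign * min (j : ℤ) |m i - k i| with hc
  set y : ℕ → Fin d → ℝ := fun j i => ρ * c j i with hy
  set N : ℕ := Finset.univ.sup (fun i => (m i - k i).natAbs) with hN
  -- integer betweenness
  have hcint : ∀ j i, min (k i) (m i) ≤ c j i ∧ c j i ≤ max (k i) (m i) := by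
    intro j i
    obtain ⟨h1, h2⟩ := int_between (j : ℤ) (by positivity) (m i - k i)
    simp only [hc]
    omega
  -- real betweenness of coordinates
  have hbetween : ∀ j i, min (x i) (z i) ≤ y j i ∧ y j i ≤ max (x i) (z i) := by
    intro j i
    obtain ⟨h1, h2⟩ := hcint j i
    have hyji : y j i = ρ * (c j i : ℝ) := by simp [hy]
    rw [hyji, hk i, hm i]
    rcases le_total (k i) (m i) with h | h
    · have hkm : (k i : ℝ) ≤ (m i : ℝ) := by exact_mod_cast h
      have hl : (k i : ℝ) ≤ (c j i : ℝ) := by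
        have := min_eq_left h ▸ h1; exact_mod_cast this
      have hr : (c j i : ℝ) ≤ (m i : ℝ) := by
        have := max_eq_right h ▸ h2; exact_mod_cast this
      constructor
      · rw [min_eq_left (mul_le_mul_of_nonneg_left hkm hρ.le)]
        exact mul_le_mul_of_nonneg_left hl hρ.le
      · rw [max_eq_right (mul_le_mul_of_nonneg_left hkm hρ.le)]
        exact mul_le_mul_of_nonneg_left hr hρ.le
    · have hkm : (m i : ℝ) ≤ (k i : ℝ) := by exact_mod_cast h
      have hl : (m i : ℝ) ≤ (c j i : ℝ) := by
        have := min_eq_right h ▸ h1; exact_mod_cast this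
      have hr : (c j i : ℝ) ≤ (k i : ℝ) := by
        have := max_eq_left h ▸ h2; exact_mod_cast this
      constructor
      · rw [min_eq_right (mul_le_mul_of_nonneg_left hkm hρ.le)]
        exact mul_le_mul_of_nonneg_left hl hρ.le
      · rw [max_eq_left (mul_le_mul_of_nonneg_left hkm hρ.le)]
        exact mul_le_mul_of_nonneg_left hr hρ.le
  have hmem : ∀ j, y j ∈ nbhd α M ∩ grid d ρ := by
    intro j
    refine ⟨⟨p, hp, ?_⟩, fun i => ⟨c j i, by simp [hy]⟩⟩
    rw [dist_pi_le_iff hα0]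
    intro i
    rw [Real.dist_eq]
    obtain ⟨h1, h2⟩ := hbetween j i
    calc |y j i - p i| ≤ max (|x i - p i|) (|z i - p i|) := between_abs h1 h2
      _ ≤ α := by
          refine max_le ?_ ?_
          · rw [← Real.dist_eq]; exact le_trans (dist_le_pi_dist x p i) hxp
          · rw [← Real.dist_eq]; exact le_trans (dist_le_pi_dist z p i) hzp
  have hy0 : y 0 = x := by
    funext i
    have h0 : c 0 i = k i := by
      have hA := abs_nonneg (m i - k i)
      have h0' : min ((0:ℕ) : ℤ) |m i - k i| = 0 := by omega
      simp [hc, h0']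
    simp [hy, h0, (hk i).symm]
  have hyN : y N = z := by
    funext i
    have hle : |m i - k i| ≤ (N : ℤ) := by
      have hnat : (m i - k i).natAbs ≤ N := by
        rw [hN]; exact Finset.le_sup (f := fun i => (m i - k i).natAbs) (Finset.mem_univ i)
      rw [Int.abs_eq_natAbs]
      exact_mod_cast hnat
    have hcN : c N i = m i := by
      simp only [hc]
      rw [min_eq_right hle, Int.sign_mul_abs]
      ring
    simp [hy, hcN, (hm i).symm]
  -- step condition
  have hstep : ∀ j, ChainTo d ρ (nbhd α M ∩ grid d ρ) (y j) (y (j+1)) := by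
    intro j
    refine chainTo_step hρ (hmem j) (hmem (j+1)) ?_
    intro i
    refine ⟨c (j+1) i - c j i, ?_, ?_⟩
    · have hy1 : y (j+1) i = ρ * (c (j+1) i : ℝ) := by simp [hy]
      have hy2 : y j i = ρ * (c j i : ℝ) := by simp [hy]
      rw [hy1, hy2]; push_cast; ring
    · simp only [hc]
      set A : ℤ := |m i - k i| with hA
      have hA0 : 0 ≤ A := abs_nonneg _
      have hcast : ((j + 1 : ℕ) : ℤ) = (j : ℤ) + 1 := by push_cast; ring
      rw [hcast]
      have hsign : |(m i - k i).sign| ≤ 1 := by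
        rcases lt_trichotomy (m i - k i) 0 with h | h | h
        · rw [Int.sign_eq_neg_one_of_neg h]; norm_num
        · simp [h]
        · rw [Int.sign_eq_one_of_pos h]; norm_num
      have heq : k i + (m i - k i).sign * min ((j:ℤ)+1) A -
          (k i + (m i - k i).sign * min ((j:ℤ)) A) =
          (m i - k i).sign * (min ((j:ℤ)+1) A - min (j:ℤ) A) := by ring
      rw [heq, abs_mul]
      calc |(m i - k i).sign| * |min ((j:ℤ)+1) A - min (j:ℤ) A|
          ≤ 1 * 1 := by
            refine mul_le_mul hsign ?_ (abs_nonneg _) zero_le_one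
            rw [abs_le]; omega
        _ = 1 := one_mul 1
  have hall : ∀ j, ChainTo d ρ (nbhd α M ∩ grid d ρ) x (y j) := by
    intro j
    induction j with
    | zero => rw [hy0]; exact chainTo_refl (hy0 ▸ hmem 0)
    | succ n ih => exact chainTo_trans ih (hstep n)
  rw [← hyN]; exact hall N

/-- Coordinate-wise rounding to the grid. -/
noncomputable def rnd {d : ℕ} (ρ : ℝ) (x : Fin d → ℝ) : Fin d → ℝ :=
  fun i => ρ * (round (x i / ρ) : ℤ)

lemma rnd_mem_grid {d : ℕ} (ρ : ℝ) (x : Fin d → ℝ) : rnd ρ x ∈ grid d ρ :=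
  fun i => ⟨round (x i / ρ), rfl⟩

lemma dist_rnd_le {d : ℕ} {ρ : ℝ} (hρ : 0 < ρ) (x : Fin d → ℝ) :
    dist (rnd ρ x) x ≤ ρ / 2 := by
  rw [dist_pi_le_iff (by positivity)]
  intro i
  rw [Real.dist_eq, rnd]
  have key : ρ * ((round (x i / ρ) : ℤ) : ℝ) - x i
      = ρ * (((round (x i / ρ) : ℤ) : ℝ) - x i / ρ) := by
    rw [mul_sub, mul_div_cancel₀ _ (ne_of_gt hρ)]
  rw [key, abs_mul, abs_of_pos hρ]
  calc ρ * |((round (x i / ρ) : ℤ) : ℝ) - x i / ρ| ≤ ρ * (1/2) := by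
        refine mul_le_mul_of_nonneg_left ?_ hρ.le
        rw [abs_sub_comm]
        exact abs_sub_round _
    _ = ρ / 2 := by ring

lemma rnd_step {d : ℕ} {ρ : ℝ} (hρ : 0 < ρ) {x z : Fin d → ℝ} (h : dist x z < ρ) :
    ∀ i, ∃ e : ℤ, rnd ρ z i - rnd ρ x i = ρ * e ∧ |e| ≤ 1 := by
  intro i
  refine ⟨round (z i / ρ) - round (x i / ρ), by push_cast [rnd]; ring, ?_⟩
  have hcoord : |z i - x i| < ρ := by
    rw [← Real.dist_eq]
    exact lt_of_le_of_lt (dist_le_pi_dist z x i) (dist_comm x z ▸ h)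
  have huv : |z i / ρ - x i / ρ| < 1 := by
    rw [div_sub_div_same, abs_div, abs_of_pos hρ, div_lt_one hρ]
    exact hcoord
  have h1 : |(round (z i / ρ) : ℝ) - z i / ρ| ≤ 1/2 := by
    rw [abs_sub_comm]; exact abs_sub_round _
  have h2 : |x i / ρ - (round (x i / ρ) : ℝ)| ≤ 1/2 := abs_sub_round _
  have h3 := abs_sub_le ((round (z i / ρ) : ℝ)) (z i / ρ) ((round (x i / ρ) : ℝ))
  have h4 := abs_sub_le (z i / ρ) (x i / ρ) ((round (x i / ρ) : ℝ))
  have hlt : (|round (z i / ρ) - round (x i / ρ)| : ℝ) < 2 := by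
    push_cast
    linarith [abs_sub_le ((round (z i / ρ) : ℝ)) (z i / ρ) ((round (x i / ρ) : ℝ))]
  have hfin : |round (z i / ρ) - round (x i / ρ)| < 2 := by exact_mod_cast hlt
  omega

theorem digitization_nonempty_and_chainConnected (d : ℕ) (M : Set (Fin d → ℝ))
    (α ρ : ℝ) (hMne : M.Nonempty) (hMcpt : IsCompact M)
    (hρ : 0 < ρ) (hα : 0 < α) (hαρ : ρ/2 ≤ α) :
    (nbhd α M ∩ grid d ρ).Nonempty ∧
      (IsPathConnected M → ChainConnected d ρ (nbhd α M ∩ grid d ρ)) := by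
  constructor
  · obtain ⟨p, hp⟩ := hMne
    exact ⟨rnd ρ p, ⟨p, hp, le_trans (dist_rnd_le hρ p) hαρ⟩, rnd_mem_grid ρ p⟩
  · intro hpc x hx z hz
    obtain ⟨⟨p, hpM, hxp⟩, hxg⟩ := hx
    obtain ⟨⟨q, hqM, hzq⟩, hzg⟩ := hz
    obtain ⟨γ, hγ⟩ := hpc.joinedIn p hpM q hqM
    have hUC : UniformContinuous γ := CompactSpace.uniformContinuous_of_continuous γ.continuous
    obtain ⟨δ, hδ, hmod⟩ := Metric.uniformContinuous_iff.mp hUC ρ hρ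
    obtain ⟨m, hm⟩ := exists_nat_one_div_lt hδ
    set N : ℕ := m + 1 with hNdef
    have hN0 : (0 : ℝ) < N := by positivity
    set f : ℕ → unitInterval := fun j => ⟨(min j N : ℝ) / N, by
      constructor
      · exact div_nonneg (le_min (by positivity) hN0.le) hN0.le
      · rw [div_le_one hN0]
        exact min_le_right _ _⟩ with hf
    have hf0 : f 0 = 0 := by
      apply Subtype.ext
      show min ((0:ℕ) : ℝ) (N : ℝ) / N = ((0 : unitInterval) : ℝ)
      rw [Nat.cast_zero, min_eq_left hN0.le, zero_div]
      simp
    have hfN : f N = 1 := by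
      apply Subtype.ext
      show min ((N:ℕ) : ℝ) (N : ℝ) / N = ((1 : unitInterval) : ℝ)
      rw [min_self, div_self (ne_of_gt hN0)]
      simp
    have hfstep : ∀ j, dist (f (j+1)) (f j) < δ := by
      intro j
      rw [Subtype.dist_eq]
      show |min ((j+1 : ℕ) : ℝ) (N:ℝ) / N - min ((j:ℕ) : ℝ) (N:ℝ) / N| < δ
      have hcast : ((j + 1 : ℕ) : ℝ) = (j : ℝ) + 1 := by push_cast; ring
      rw [hcast]
      set a : ℝ := (j : ℝ) with ha
      have h1 : min a (N:ℝ) ≤ min (a+1) (N:ℝ) := min_le_min (by linarith) le_rfl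
      have h2 : min (a+1) (N:ℝ) ≤ min a (N:ℝ) + 1 := by
        rcases le_total a (N:ℝ) with h | h
        · rw [min_eq_left h]
          exact min_le_left _ _
        · rw [min_eq_right h]
          calc min (a+1) (N:ℝ) ≤ (N:ℝ) := min_le_right _ _
            _ ≤ (N:ℝ) + 1 := by linarith
      have hb : |min (a+1) (N:ℝ) / N - min a (N:ℝ) / N| ≤ 1 / N := by
        rw [div_sub_div_same, abs_div, abs_of_pos hN0, div_le_div_iff₀ hN0 hN0]
        rw [abs_of_nonneg (by linarith)]
        nlinarith
      calc |min (a+1) (N:ℝ) / N - min a (N:ℝ) / N| ≤ 1 / N := hb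
        _ = 1 / (m + 1 : ℝ) := by rw [hNdef]; push_cast; ring
        _ < δ := hm
    set S := nbhd α M ∩ grid d ρ with hS
    set g : ℕ → Fin d → ℝ := fun j => rnd ρ (γ (f j)) with hg
    have hgmem : ∀ j, g j ∈ S := by
      intro j
      exact ⟨⟨γ (f j), hγ (f j), le_trans (dist_rnd_le hρ _) hαρ⟩, rnd_mem_grid ρ _⟩
    have hgstep : ∀ j, ChainTo d ρ S (g j) (g (j+1)) := by
      intro j
      refine chainTo_step hρ (hgmem j) (hgmem (j+1)) (rnd_step hρ ?_)
      rw [dist_comm]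
      exact hmod (hfstep j)
    have hchain : ∀ j, ChainTo d ρ S (g 0) (g j) := by
      intro j
      induction j with
      | zero => exact chainTo_refl (hgmem 0)
      | succ n ih => exact chainTo_trans ih (hgstep n)
    have hg0 : g 0 = rnd ρ p := by rw [hg]; simp only [hf0, γ.source]
    have hgN : g N = rnd ρ q := by rw [hg]; simp only [hfN, γ.target]
    have c1 : ChainTo d ρ S x (rnd ρ p) :=
      chainTo_anchor hρ hpM hxg (rnd_mem_grid ρ p) hxp (le_trans (dist_rnd_le hρ p) hαρ)
    have c2 : ChainTo d ρ S (rnd ρ q) z :=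
      chainTo_anchor hρ hqM (rnd_mem_grid ρ q) hzg (le_trans (dist_rnd_le hρ q) hαρ) hzq
    have c3 : ChainTo d ρ S (rnd ρ p) (rnd ρ q) := by
      rw [← hg0, ← hgN]; exact hchain N
    exact chainTo_trans (chainTo_trans c1 c3) c2
end

section
/- For every ρ > 0, the map M ↦ (∂⁰_ρ M, ∂¹_ρ M) from nonempty subsets of Δ_ρ to pairs of subsets of Δ_ρ is injective, where ∂⁰_ρ M = {x ∈ M : ∃ z ∈ Δ_ρ \ M with ‖x−z‖_∞ = ρ} and ∂¹_ρ M = {x ∈ Δ_ρ \ M : dist(x, ∂⁰_ρ M) = ρ}. -/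
/-- Inner boundary layer ∂⁰_ρ M. -/
def bd0 (d : ℕ) (ρ : ℝ) (M : Set (Fin d → ℝ)) : Set (Fin d → ℝ) :=
  {x ∈ M | ∃ z ∈ grid d ρ \ M, dist x z = ρ}

/-- Outer boundary layer ∂¹_ρ M. -/
noncomputable def bd1 (d : ℕ) (ρ : ℝ) (M : Set (Fin d → ℝ)) : Set (Fin d → ℝ) :=
  {x ∈ grid d ρ \ M | Metric.infDist x (bd0 d ρ M) = ρ}

namespace BoundaryAux

variable {d : ℕ} {ρ : ℝ}

lemma dist_grid (hρ : 0 < ρ) {x y : Fin d → ℝ} (k l : Fin d → ℤ)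
    (hk : ∀ i, x i = ρ * k i) (hl : ∀ i, y i = ρ * l i) :
    dist x y = ρ * (Finset.univ.sup fun i => (k i - l i).natAbs : ℕ) := by
  set n : ℕ := Finset.univ.sup fun i => (k i - l i).natAbs with hn
  have hcoord : ∀ i, dist (x i) (y i) = ρ * ((k i - l i).natAbs : ℝ) := by
    intro i
    rw [Real.dist_eq, hk i, hl i, ← mul_sub, abs_mul, abs_of_pos hρ]
    congr 1
    rw [← Int.cast_sub, Nat.cast_natAbs, Int.cast_abs]
  apply le_antisymm
  · rw [dist_pi_le_iff (by positivity)]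
    intro i
    rw [hcoord i]
    have h1 : ((k i - l i).natAbs : ℝ) ≤ (n : ℝ) := by
      exact_mod_cast Finset.le_sup (f := fun i => (k i - l i).natAbs)
        (Finset.mem_univ i)
    nlinarith
  · rcases Nat.eq_zero_or_pos n with h0 | hpos
    · rw [h0]
      simpa using dist_nonneg
    · have hne : (Finset.univ : Finset (Fin d)).Nonempty := by
        by_contra h
        rw [Finset.not_nonempty_iff_eq_empty] at h
        rw [hn, h] at hpos
        simp at hpos
      obtain ⟨i, -, hi⟩ := Finset.exists_mem_eq_sup Finset.univ hne
        (fun i => (k i - l i).natAbs)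
      calc ρ * n = dist (x i) (y i) := by rw [hcoord i, ← hi, hn]
        _ ≤ dist x y := dist_le_pi_dist x y i

lemma dist_grid_nat (hρ : 0 < ρ) {x y : Fin d → ℝ} (hx : x ∈ grid d ρ)
    (hy : y ∈ grid d ρ) : ∃ n : ℕ, dist x y = ρ * n := by
  choose k hk using hx
  choose l hl using hy
  exact ⟨_, dist_grid hρ k l hk hl⟩

lemma natAbs_sub_sign (t : ℤ) : (t - t.sign).natAbs = t.natAbs - 1 := by
  rcases lt_trichotomy t 0 with h | h | h
  · rw [Int.sign_eq_neg_one_of_neg h]; omega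
  · simp [h]
  · rw [Int.sign_eq_one_of_pos h]; omega

/-- Step lemma: from a grid point at distance `ρ(n+1)` from `b` one can move to a
neighbor at distance `ρ n` from `b`. -/
lemma step (hρ : 0 < ρ) {x b : Fin d → ℝ} (hx : x ∈ grid d ρ) (hb : b ∈ grid d ρ)
    {n : ℕ} (hd : dist x b = ρ * (n + 1 : ℕ)) :
    ∃ y ∈ grid d ρ, dist x y = ρ ∧ dist y b = ρ * n := by
  choose k hk using hx
  choose l hl using hb
  set ky : Fin d → ℤ := fun i => k i - (k i - l i).sign with hky
  set y : Fin d → ℝ := fun i => ρ * ky i with hy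
  have hyg : y ∈ grid d ρ := fun i => ⟨ky i, rfl⟩
  have hyk : ∀ i, y i = ρ * ky i := fun i => rfl
  have hsup : (Finset.univ.sup fun i => (k i - l i).natAbs : ℕ) = n + 1 := by
    have := dist_grid hρ k l hk hl
    rw [hd] at this
    have h2 := mul_left_cancel₀ hρ.ne' this
    exact_mod_cast h2.symm
  have hne : (Finset.univ : Finset (Fin d)).Nonempty := by
    by_contra h
    rw [Finset.not_nonempty_iff_eq_empty] at h
    rw [h] at hsup
    simp at hsup
  obtain ⟨i0, -, hi0⟩ := Finset.exists_mem_eq_sup Finset.univ hne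
    (fun i => (k i - l i).natAbs)
  rw [hsup] at hi0
  refine ⟨y, hyg, ?_, ?_⟩
  · have h1 : dist x y = ρ * (Finset.univ.sup fun i => (k i - ky i).natAbs : ℕ) :=
      dist_grid hρ k ky hk hyk
    have h2 : (Finset.univ.sup fun i => (k i - ky i).natAbs : ℕ) = 1 := by
      apply le_antisymm
      · apply Finset.sup_le
        intro i _
        simp only [hky, sub_sub_cancel, Int.natAbs_sign]
        split <;> omega
      · have : (k i0 - ky i0).natAbs = 1 := by
          simp only [hky, sub_sub_cancel, Int.natAbs_sign]
          split
          · omega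
          · rfl
        calc (1:ℕ) = (k i0 - ky i0).natAbs := this.symm
          _ ≤ _ := Finset.le_sup (f := fun i => (k i - ky i).natAbs)
            (Finset.mem_univ i0)
      -- note: if k i0 - l i0 = 0 then natAbs = n+1 = 0 impossible; handled by omega above
    rw [h1, h2]
    simp
  · have h1 : dist y b = ρ * (Finset.univ.sup fun i => (ky i - l i).natAbs : ℕ) :=
      dist_grid hρ ky l hyk hl
    have h2 : (Finset.univ.sup fun i => (ky i - l i).natAbs : ℕ) = n := by
      apply le_antisymm
      · apply Finset.sup_le
        intro i _
        have hle : (k i - l i).natAbs ≤ n + 1 := by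
          rw [← hsup]
          exact Finset.le_sup (f := fun i => (k i - l i).natAbs)
            (Finset.mem_univ i)
        have : (ky i - l i).natAbs = (k i - l i).natAbs - 1 := by
          have he : ky i - l i = (k i - l i) - (k i - l i).sign := by
            simp only [hky]; ring
          rw [he, natAbs_sub_sign]
        omega
      · have : (ky i0 - l i0).natAbs = n := by
          have he : ky i0 - l i0 = (k i0 - l i0) - (k i0 - l i0).sign := by
            simp only [hky]; ring
          rw [he, natAbs_sub_sign, ← hi0]
          omega
        calc n = (ky i0 - l i0).natAbs := this.symm
          _ ≤ _ := Finset.le_sup (f := fun i => (ky i - l i).natAbs)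
            (Finset.mem_univ i0)
    rw [h1, h2]

/-- The infimum distance from a grid point to a nonempty set of grid points is
attained and is a natural multiple of ρ. -/
lemma infDist_grid (hρ : 0 < ρ) {x : Fin d → ℝ} (hx : x ∈ grid d ρ)
    {B : Set (Fin d → ℝ)} (hB : B ⊆ grid d ρ) (hBne : B.Nonempty) :
    ∃ n : ℕ, ∃ b ∈ B, dist x b = ρ * n ∧ Metric.infDist x B = ρ * n := by
  classical
  have hex : ∃ n : ℕ, ∃ b ∈ B, dist x b = ρ * n := by
    obtain ⟨b, hb⟩ := hBne
    obtain ⟨n, hn⟩ := dist_grid_nat hρ hx (hB hb)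
    exact ⟨n, b, hb, hn⟩
  obtain ⟨b, hbB, hbd⟩ := Nat.find_spec hex
  refine ⟨Nat.find hex, b, hbB, hbd, le_antisymm ?_ ?_⟩
  · rw [← hbd]
    exact Metric.infDist_le_dist_of_mem hbB
  · by_contra hlt
    push_neg at hlt
    rw [Metric.infDist_lt_iff hBne] at hlt
    obtain ⟨c, hcB, hc⟩ := hlt
    obtain ⟨m, hm⟩ := dist_grid_nat hρ hx (hB hcB)
    have hmn : m < Nat.find hex := by
      by_contra hge
      push_neg at hge
      rw [hm] at hc
      have : (m:ℝ) < Nat.find hex := by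
        have := (mul_lt_mul_iff_right₀ hρ).mp hc
        exact this
      exact absurd (Nat.cast_le.mpr hge) (not_le.mpr this)
    exact Nat.find_min hex hmn ⟨c, hcB, hm⟩

lemma eq_of_dist_eq_zero' {x y : Fin d → ℝ} (h : dist x y = 0) : x = y :=
  dist_eq_zero.mp h

/-- If the inner boundary is empty, M is the entire grid. -/
lemma eq_grid_of_bd0_empty (hρ : 0 < ρ) {M : Set (Fin d → ℝ)} (hM : M ⊆ grid d ρ)
    (hMne : M.Nonempty) (h : bd0 d ρ M = ∅) : M = grid d ρ := by
  have key : ∀ n : ℕ, ∀ x ∈ M, ∀ z ∈ grid d ρ, z ∉ M → dist x z = ρ * n → False := by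
    intro n
    induction n with
    | zero =>
      intro x hxM z _ hzM hd
      simp at hd
      exact hzM (hd ▸ hxM)
    | succ n ih =>
      intro x hxM z hz hzM hd
      obtain ⟨y, hyg, hxy, hyz⟩ := step hρ (hM hxM) hz hd
      by_cases hyM : y ∈ M
      · exact ih y hyM z hz hzM hyz
      · have : x ∈ bd0 d ρ M := ⟨hxM, y, ⟨hyg, hyM⟩, hxy⟩
        rw [h] at this
        exact this
  apply Set.Subset.antisymm hM
  intro z hz
  by_contra hzM
  obtain ⟨m, hm⟩ := hMne
  obtain ⟨n, hn⟩ := dist_grid_nat hρ (hM hm) hz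
  exact key n m hm z hz hzM hn

end BoundaryAux

open BoundaryAux in
theorem boundary_pair_injective (d : ℕ) (ρ : ℝ) (hρ : 0 < ρ)
    (M N : Set (Fin d → ℝ)) (hM : M ⊆ grid d ρ) (hN : N ⊆ grid d ρ)
    (hMne : M.Nonempty) (hNne : N.Nonempty)
    (h0 : bd0 d ρ M = bd0 d ρ N) (h1 : bd1 d ρ M = bd1 d ρ N) :
    M = N := by
  set B := bd0 d ρ M with hB
  have hBsub : B ⊆ grid d ρ := fun x hx => hM hx.1
  rcases Set.eq_empty_or_nonempty B with hBe | hBne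
  · rw [eq_grid_of_bd0_empty hρ hM hMne hBe,
      eq_grid_of_bd0_empty hρ hN hNne (h0 ▸ hBe)]
  · -- B nonempty
    have hBM : B ⊆ M := fun x hx => hx.1
    have hBN : B ⊆ N := fun x hx => (h0 ▸ hx : x ∈ bd0 d ρ N).1
    have key : ∀ n : ℕ, ∀ x ∈ grid d ρ, Metric.infDist x B = ρ * n →
        (x ∈ M ↔ x ∈ N) := by
      intro n
      induction n using Nat.strong_induction_on with
      | _ n ih =>
        intro x hxg hxd
        obtain ⟨m, b, hbB, hdxb, hinf⟩ := infDist_grid hρ hxg hBsub hBne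
        have hmn : m = n := by
          have : (ρ:ℝ) * m = ρ * n := by rw [← hinf, hxd]
          exact_mod_cast mul_left_cancel₀ hρ.ne' this
        rw [hmn] at hdxb
        clear hinf hmn
        match n, hdxb, hxd, ih with
        | 0, hdxb, hxd, ih =>
          have : x = b := eq_of_dist_eq_zero' (by simpa using hdxb)
          subst this
          exact ⟨fun _ => hBN hbB, fun _ => hBM hbB⟩
        | 1, hdxb, hxd, ih =>
          have hxd' : Metric.infDist x B = ρ := by rw [hxd]; norm_num
          have hxB : x ∉ B := by
            intro hxB
            rw [Metric.infDist_zero_of_mem hxB] at hxd'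
            linarith
          constructor
          · intro hxM
            by_contra hxN
            have : x ∈ bd1 d ρ N := ⟨⟨hxg, hxN⟩, by rw [← h0]; exact hxd'⟩
            rw [← h1] at this
            exact this.1.2 hxM
          · intro hxN
            by_contra hxM
            have : x ∈ bd1 d ρ M := ⟨⟨hxg, hxM⟩, hxd'⟩
            rw [h1] at this
            exact this.1.2 hxN
        | (n+2), hdxb, hxd, ih =>
          have hxB : x ∉ B := by
            intro hxB
            rw [Metric.infDist_zero_of_mem hxB] at hxd
            have : (0:ℝ) < ρ * (n+2:ℕ) := by positivity
            rw [← hxd] at this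
            exact lt_irrefl _ this
          obtain ⟨y, hyg, hxy, hyb⟩ := step hρ hxg (hBsub hbB) hdxb
          have hyinf : Metric.infDist y B = ρ * (n+1 : ℕ) := by
            apply le_antisymm
            · rw [← hyb]
              exact Metric.infDist_le_dist_of_mem hbB
            · have htri : Metric.infDist x B ≤ Metric.infDist y B + dist x y :=
                Metric.infDist_le_infDist_add_dist
              rw [hxd, hxy] at htri
              push_cast at htri ⊢
              linarith
          have hyB : y ∉ B := by
            intro hyB
            rw [Metric.infDist_zero_of_mem hyB] at hyinf
            have : (0:ℝ) < ρ * (n+1:ℕ) := by positivity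
            rw [← hyinf] at this
            exact lt_irrefl _ this
          have hIH : y ∈ M ↔ y ∈ N := ih (n+1) (by omega) y hyg hyinf
          have hxM : x ∈ M ↔ y ∈ M := by
            constructor
            · intro hxM
              by_contra hyM
              exact hxB ⟨hxM, y, ⟨hyg, hyM⟩, hxy⟩
            · intro hyM
              by_contra hxM
              exact hyB ⟨hyM, x, ⟨hxg, hxM⟩, by rw [dist_comm]; exact hxy⟩
          have hxN : x ∈ N ↔ y ∈ N := by
            constructor
            · intro hxN
              by_contra hyN
              exact hxB (h0 ▸ (⟨hxN, y, ⟨hyg, hyN⟩, hxy⟩ : x ∈ bd0 d ρ N))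
            · intro hyN
              by_contra hxN
              exact hyB (h0 ▸ (⟨hyN, x, ⟨hxg, hxN⟩, by
                rw [dist_comm]; exact hxy⟩ : y ∈ bd0 d ρ N))
          rw [hxM, hIH, hxN]
    ext x
    constructor
    · intro hxM
      obtain ⟨n, _, _, _, hinf⟩ := infDist_grid hρ (hM hxM) hBsub hBne
      exact (key n x (hM hxM) hinf).mp hxM
    · intro hxN
      obtain ⟨n, _, _, _, hinf⟩ := infDist_grid hρ (hN hxN) hBsub hBne
      exact (key n x (hN hxN) hinf).mpr hxN
end

section
/- Fix L, P, T > 0. Define E(δ) for an admissible discretization δ = (h, t, ρ) with t = cumulative sums of h, t_n = T, ‖h‖_∞ ≤ 1/(4L), ‖ρ‖_∞ ≤ P/(8L), and ρ_j = 2LP h_j² for j ≥ 1, by E(δ) = (ρ_0/2)e^{LT} + Σ_{k=1}^n e^{L(T−t_k)}[(e^{Lh_k}−1)(Ph_k + ((1+Lh_k)²/(Lh_k))(ρ_{k−1}/2)) + χ_k], where χ_k = ρ_k/2 if ρ_{k−1} < ρ_k and 0 otherwise. Then E(δ) ≤ ω_1(‖ρ‖_∞) where ω_1(s) = (1/2)e^{LT}s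 + (1/√2)Te^{LT}√(LPs) + e^{4LT}(s + T√(2LPs)); in particular E(δ) → 0 uniformly as ‖ρ‖_∞ → 0. -/
/-! Writing `R = ‖ρ‖_∞`, the coupling gives `(2LP h_k)² = 2LP ρ_{k+1} ≤ 2LP R`, so
`LP h_k² ≤ (√(2LPR)/2) h_k` and the quadratic quantity `Q = Σ LP h_k²` is at most
`√(2LPR) T / 2`. With `x = L h_k`, the estimates `eˣ - 1 ≤ x eˣ` and `(1 + x)² ≤ e²ˣ` bound the
k-th summand of `E(δ)` by `e^{LT} LP h_k² + e^{4LT} (ρ_k/2 + LP h_k²)`, and the coupling once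
more bounds `Σ ρ_k / 2` by `ρ_0/2 + Q`. -/

/-- temporal nodes: t_k = h_1 + ... + h_k (0-based steps h 0,...,h (n-1)). -/
noncomputable def tnode (h : ℕ → ℝ) (k : ℕ) : ℝ := ∑ j ∈ Finset.range k, h j

/-- A priori error bound E(δ) of the nonuniform set-valued Euler scheme.
Index k of the sum ranges over 0,...,n-1 and represents the paper's step k+1,
so h k = h_{k+1}, ρ k = ρ_k, and χ_{k+1} compares ρ_k with ρ_{k+1}. -/
noncomputable def Eerr (L P T : ℝ) (n : ℕ) (h ρ : ℕ → ℝ) : ℝ :=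
  ρ 0 / 2 * Real.exp (L*T) +
    ∑ k ∈ Finset.range n,
      Real.exp (L*(T - tnode h (k+1))) *
        ((Real.exp (L * h k) - 1) * (P * h k + ((1 + L * h k)^2 / (L * h k)) * (ρ k / 2))
          + (if ρ k < ρ (k+1) then ρ (k+1) / 2 else 0))

open Finset Real

lemma Real.exp_sub_one_le_mul_exp (x : ℝ) : exp x - 1 ≤ x * exp x := by
  have h := mul_le_mul_of_nonneg_right (one_sub_le_exp_neg x) (exp_pos x).le
  rw [exp_neg, inv_mul_cancel₀ (exp_ne_zero x)] at h
  linarith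

lemma Real.exp_sub_one_mul_one_add_sq_div_le {x : ℝ} (hx : 0 < x) :
    (exp x - 1) * ((1 + x) ^ 2 / x) ≤ exp (3 * x) := by
  have hsq : (1 + x) ^ 2 ≤ exp x ^ 2 :=
    pow_le_pow_left₀ (by positivity) (by linarith [add_one_le_exp x]) 2
  rw [mul_div_assoc', div_le_iff₀ hx, show exp (3 * x) = exp x * exp x ^ 2 by
    rw [← exp_nat_mul, ← exp_add]; ring_nf]
  calc (exp x - 1) * (1 + x) ^ 2 ≤ x * exp x * (1 + x) ^ 2 := by
        gcongr; exact exp_sub_one_le_mul_exp x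
    _ ≤ x * exp x * exp x ^ 2 := by gcongr
    _ = exp x * exp x ^ 2 * x := by ring

lemma Finset.sum_range_le_add_sum_range_succ {M : Type*} [AddCommGroup M] [PartialOrder M]
    [IsOrderedAddMonoid M] (f : ℕ → M) {n : ℕ} (hn : 0 ≤ f n) :
    ∑ k ∈ range n, f k ≤ f 0 + ∑ k ∈ range n, f (k + 1) := by
  have h := (sum_range_succ f n).symm.trans (sum_range_succ' f n)
  rw [add_comm (∑ k ∈ range n, f (k + 1))] at h
  rw [← h]
  exact le_add_of_nonneg_right hn

lemma mul_sq_le_of_two_mul_sq_le {c τ R : ℝ} (hc : 0 ≤ c) (hτ : 0 ≤ τ)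
    (h : 2 * c * τ ^ 2 ≤ R) : c * τ ^ 2 ≤ √(2 * c * R) / 2 * τ := by
  have hlin : 2 * c * τ ≤ √(2 * c * R) :=
    le_sqrt_of_sq_le (by nlinarith [mul_le_mul_of_nonneg_left h (by positivity : 0 ≤ 2 * c)])
  nlinarith

lemma Eerr_summand_le {L P T t τ ρ₀ ρ₁ : ℝ} (hL : 0 < L) (hP : 0 ≤ P) (ht : 0 ≤ t)
    (hτ : 0 < τ) (htT : t + τ ≤ T) (hρ₀ : 0 ≤ ρ₀) (hρ₁ : ρ₁ = 2 * L * P * τ ^ 2) :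
    exp (L * (T - (t + τ))) *
        ((exp (L * τ) - 1) * (P * τ + ((1 + L * τ) ^ 2 / (L * τ)) * (ρ₀ / 2))
          + (if ρ₀ < ρ₁ then ρ₁ / 2 else 0))
      ≤ exp (L * T) * (L * P * τ ^ 2) + exp (4 * L * T) * (ρ₀ / 2 + L * P * τ ^ 2) := by
  set A := exp (L * (T - (t + τ)))
  have hLτ : 0 < L * τ := mul_pos hL hτ
  have hA₁ : A * exp (L * τ) ≤ exp (L * T) := by
    rw [← exp_add, exp_le_exp]; nlinarith
  have hA₃ : A * exp (3 * (L * τ)) ≤ exp (4 * L * T) := by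
    rw [← exp_add, exp_le_exp]; nlinarith
  have hA : A ≤ exp (4 * L * T) := by
    rw [exp_le_exp]; nlinarith
  have hχ : (if ρ₀ < ρ₁ then ρ₁ / 2 else 0) ≤ L * P * τ ^ 2 := by
    split_ifs <;> nlinarith [mul_nonneg (mul_nonneg hL.le hP) (sq_nonneg τ)]
  have hdrift : A * ((exp (L * τ) - 1) * (P * τ)) ≤ exp (L * T) * (L * P * τ ^ 2) :=
    calc A * ((exp (L * τ) - 1) * (P * τ)) ≤ A * (L * τ * exp (L * τ) * (P * τ)) := by
          gcongr; exact exp_sub_one_le_mul_exp _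
      _ = A * exp (L * τ) * (L * P * τ ^ 2) := by ring
      _ ≤ exp (L * T) * (L * P * τ ^ 2) := by gcongr
  have hspread : A * ((exp (L * τ) - 1) * (((1 + L * τ) ^ 2 / (L * τ)) * (ρ₀ / 2)))
      ≤ exp (4 * L * T) * (ρ₀ / 2) :=
    calc A * ((exp (L * τ) - 1) * (((1 + L * τ) ^ 2 / (L * τ)) * (ρ₀ / 2)))
        = A * ((exp (L * τ) - 1) * ((1 + L * τ) ^ 2 / (L * τ))) * (ρ₀ / 2) := by ring
      _ ≤ A * exp (3 * (L * τ)) * (ρ₀ / 2) := by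
          gcongr; exact exp_sub_one_mul_one_add_sq_div_le hLτ
      _ ≤ exp (4 * L * T) * (ρ₀ / 2) := by gcongr
  have hjump : A * (if ρ₀ < ρ₁ then ρ₁ / 2 else 0) ≤ exp (4 * L * T) * (L * P * τ ^ 2) :=
    mul_le_mul hA hχ (by split_ifs <;> nlinarith [sq_nonneg τ]) (exp_pos _).le
  linear_combination hdrift + hspread + hjump

theorem Eerr_le_of_coupling {L P T : ℝ} {n : ℕ} {h ρ : ℕ → ℝ} (hL : 0 < L) (hP : 0 ≤ P)
    (hpos : ∀ j < n, 0 < h j) (hsum : ∑ j ∈ range n, h j = T) (hρ₀ : 0 ≤ ρ 0)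
    (coupling : ∀ j < n, ρ (j + 1) = 2 * L * P * h j ^ 2) :
    Eerr L P T n h ρ ≤ ρ 0 / 2 * exp (L * T) + exp (L * T) * ∑ k ∈ range n, L * P * h k ^ 2
      + exp (4 * L * T) * (ρ 0 / 2 + 2 * ∑ k ∈ range n, L * P * h k ^ 2) := by
  have hρ : ∀ k ≤ n, 0 ≤ ρ k := by
    rintro (_ | j) hj
    · exact hρ₀
    · rw [coupling j hj]; positivity
  have hρsum : ∑ k ∈ range n, ρ k / 2 ≤ ρ 0 / 2 + ∑ k ∈ range n, L * P * h k ^ 2 := by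
    refine (sum_range_le_add_sum_range_succ (fun k ↦ ρ k / 2)
      (div_nonneg (hρ n le_rfl) zero_le_two)).trans ?_
    gcongr with k hk
    rw [coupling k (mem_range.mp hk)]; linarith
  have htnode : ∀ k < n, 0 ≤ tnode h k ∧ tnode h k + h k ≤ T := fun k hk ↦ by
    have hmono := sum_le_sum_of_subset_of_nonneg (range_subset_range.mpr hk)
      (fun j hj _ ↦ (hpos j (mem_range.mp hj)).le)
    rw [sum_range_succ] at hmono
    exact ⟨sum_nonneg fun j hj ↦ (hpos j ((mem_range.mp hj).trans hk)).le, hsum ▸ hmono⟩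
  calc Eerr L P T n h ρ
      ≤ ρ 0 / 2 * exp (L * T) + ∑ k ∈ range n,
          (exp (L * T) * (L * P * h k ^ 2) + exp (4 * L * T) * (ρ k / 2 + L * P * h k ^ 2)) := by
        rw [Eerr]
        gcongr with k hk
        have hk := mem_range.mp hk
        rw [tnode, sum_range_succ]
        exact Eerr_summand_le hL hP (htnode k hk).1 (hpos k hk) (htnode k hk).2
          (hρ k hk.le) (coupling k hk)
    _ = ρ 0 / 2 * exp (L * T) + exp (L * T) * ∑ k ∈ range n, L * P * h k ^ 2
          + exp (4 * L * T) * (∑ k ∈ range n, ρ k / 2 + ∑ k ∈ range n, L * P * h k ^ 2) := by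
        simp only [sum_add_distrib, mul_add, mul_sum]; ring
    _ ≤ _ := by linarith [mul_le_mul_of_nonneg_left hρsum (exp_pos (4 * L * T)).le]

theorem Eerr_le_omega1 (L P T : ℝ) (hL : 0 < L) (hP : 0 < P)
    (n : ℕ) (h ρ : ℕ → ℝ)
    (hpos : ∀ j < n, 0 < h j) (hsum : ∑ j ∈ Finset.range n, h j = T)
    (ρpos : ∀ k ≤ n, 0 < ρ k)
    (coupling : ∀ j < n, ρ (j+1) = 2*L*P*(h j)^2) :
    Eerr L P T n h ρ ≤
      (1/2) * Real.exp (L*T) * ((Finset.range (n+1)).sup' ⟨0, by simp⟩ ρ)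
        + (1/Real.sqrt 2) * T * Real.exp (L*T) *
            Real.sqrt (L*P*((Finset.range (n+1)).sup' ⟨0, by simp⟩ ρ))
        + Real.exp (4*L*T) *
            (((Finset.range (n+1)).sup' ⟨0, by simp⟩ ρ)
              + T * Real.sqrt (2*L*P*((Finset.range (n+1)).sup' ⟨0, by simp⟩ ρ))) := by
  set R := (range (n + 1)).sup' ⟨0, by simp⟩ ρ
  have hρR : ∀ k ≤ n, ρ k ≤ R := fun k hk ↦ le_sup' ρ (mem_range.mpr (Nat.lt_succ_of_le hk))
  have hρ₀ : 0 < ρ 0 := ρpos 0 n.zero_le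
  have hQ : ∑ k ∈ range n, L * P * h k ^ 2 ≤ √(2 * L * P * R) / 2 * T := by
    rw [← hsum, mul_sum]
    refine sum_le_sum fun k hk ↦ ?_
    have hk := mem_range.mp hk
    rw [mul_assoc 2 L P]
    exact mul_sq_le_of_two_mul_sq_le (by positivity) (hpos k hk).le
      (by simpa [coupling k hk, mul_assoc] using hρR (k + 1) hk)
  have hsqrt : 1 / √2 * √(L * P * R) = √(2 * L * P * R) / 2 := by
    rw [mul_assoc 2 L P, mul_assoc 2, sqrt_mul zero_le_two]
    field_simp
    rw [sq_sqrt zero_le_two, mul_comm]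
  have hE := Eerr_le_of_coupling hL hP.le hpos hsum hρ₀.le coupling
  have h₁ := mul_le_mul_of_nonneg_left hQ (exp_pos (L * T)).le
  have h₄ := mul_le_mul_of_nonneg_left hQ (exp_pos (4 * L * T)).le
  have h₀ := mul_le_mul_of_nonneg_left (hρR 0 n.zero_le) (exp_pos (L * T)).le
  have h₀' := mul_le_mul_of_nonneg_left (hρR 0 n.zero_le) (exp_pos (4 * L * T)).le
  have hR₄ : 0 ≤ exp (4 * L * T) * R :=
    mul_nonneg (exp_pos _).le (hρ₀.le.trans (hρR 0 n.zero_le))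
  linear_combination hE + h₁ + 2 * h₄ + h₀ / 2 + h₀' / 2 + hR₄ / 2 - exp (L * T) * T * hsqrt
end

section
/- Under the coupling ρ_j = 2LP h_j² with ‖h‖_∞ ≤ 1/(4L) and Σ h_k = T, one has Σ_{k=1}^n e^{L(T−t_k)} χ_k(δ) ≤ (1/√2) T e^{LT} √(LP ‖ρ‖_∞), where χ_k(δ) = ρ_k/2 if ρ_{k−1} < ρ_k and 0 otherwise, and t_k = Σ_{j≤k} h_j. -/
/-!
Each step contributes at most `e^{LT} ρ_{k+1}/2`, and the coupling gives
`ρ_{k+1}/2 = LP h_k² = h_k √(LP ρ_{k+1}/2) ≤ h_k √(LP ‖ρ‖_∞/2)`.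
Summing over `k` and using `Σ h_k = T` gives the bound.
-/

open Finset Real

lemma tnode_nonneg {h : ℕ → ℝ} {k : ℕ} (hh : ∀ j < k, 0 ≤ h j) : 0 ≤ tnode h k :=
  sum_nonneg fun j hj => hh j (mem_range.mp hj)

lemma exp_mul_ite_le {L T t c : ℝ} {p : Prop} [Decidable p] (hL : 0 ≤ L) (ht : 0 ≤ t)
    (hc : 0 ≤ c) : exp (L * (T - t)) * (if p then c else 0) ≤ exp (L * T) * c := by
  have hexp : exp (L * (T - t)) ≤ exp (L * T) := exp_le_exp.mpr (by nlinarith)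
  split_ifs
  · exact mul_le_mul_of_nonneg_right hexp hc
  · rw [mul_zero]; positivity

lemma mul_sq_le_mul_sqrt_half {a x M : ℝ} (ha : 0 ≤ a) (hx : 0 ≤ x) (hM : 2 * a * x ^ 2 ≤ M) :
    a * x ^ 2 ≤ x * √(a * M / 2) := by
  have hax : a * x ≤ √(a * M / 2) :=
    le_sqrt_of_sq_le (by nlinarith [mul_le_mul_of_nonneg_left hM ha])
  calc a * x ^ 2 = x * (a * x) := by ring
    _ ≤ x * √(a * M / 2) := mul_le_mul_of_nonneg_left hax hx

theorem chi_sum_bound (L P T : ℝ) (hL : 0 < L) (hP : 0 < P)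
    (n : ℕ) (h ρ : ℕ → ℝ)
    (hpos : ∀ j < n, 0 < h j) (hsum : ∑ j ∈ Finset.range n, h j = T)
    (coupling : ∀ j < n, ρ (j+1) = 2*L*P*(h j)^2) :
    (∑ k ∈ Finset.range n,
        Real.exp (L*(T - tnode h (k+1))) * (if ρ k < ρ (k+1) then ρ (k+1) / 2 else 0))
      ≤ (1/Real.sqrt 2) * T * Real.exp (L*T) *
          Real.sqrt (L * P * ((Finset.range (n+1)).sup' ⟨0, by simp⟩ ρ)) := by
  set M := (range (n + 1)).sup' ⟨0, by simp⟩ ρ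
  set C := exp (L * T) * √(L * P * M / 2)
  have hLP : 0 ≤ L * P := by positivity
  have step : ∀ k ∈ range n,
      exp (L * (T - tnode h (k + 1))) * (if ρ k < ρ (k + 1) then ρ (k + 1) / 2 else 0)
        ≤ C * h k := by
    intro k hk
    rw [mem_range] at hk
    have hρ : ρ (k + 1) / 2 = L * P * h k ^ 2 := by rw [coupling k hk]; ring
    have hρM : 2 * (L * P) * h k ^ 2 ≤ M := by
      rw [← mul_assoc, ← coupling k hk]; exact le_sup' ρ (mem_range.mpr (by omega))
    calc _ ≤ exp (L * T) * (ρ (k + 1) / 2) :=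
          exp_mul_ite_le hL.le (tnode_nonneg fun j hj => (hpos j (by omega)).le)
            (by rw [hρ]; positivity)
      _ ≤ exp (L * T) * (h k * √(L * P * M / 2)) := by
          rw [hρ]
          exact mul_le_mul_of_nonneg_left (mul_sq_le_mul_sqrt_half hLP (hpos k hk).le hρM)
            (exp_pos _).le
      _ = C * h k := by ring
  calc _ ≤ ∑ k ∈ range n, C * h k := sum_le_sum step
    _ = C * T := by rw [← mul_sum, hsum]
    _ = _ := by simp only [C]; rw [sqrt_div' _ (by norm_num : (0:ℝ) ≤ 2)]; ring
end

section
/- Let L > 0 and h ∈ (0, 1/(4L)]. Then for ρ_0, ρ_1 > 0 with ρ_1 ≤ ρ_0 (and in general ρ_1/ρ_0 a power of 4), the error decrease from refining the initial node satisfies: −(3/8)(e^{LT} + e^{L(T−t_1)}(e^{Lh}−1)(1+Lh)²/(Lh))ρ_0 + e^{L(T−t_1)}(ρ_0/2) ≤ −(1/4)ρ_0, where T ≥ t_1 ≥ h > 0. -/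
theorem initial_refinement_error_decrease (L T t₁ h ρ₀ ρ₁ : ℝ)
    (hL : 0 < L) (hh : 0 < h) (hh' : h ≤ 1/(4*L))
    (ht : h ≤ t₁) (htT : t₁ ≤ T)
    (hρ₀ : 0 < ρ₀) (hρ₁ : 0 < ρ₁) (hρ : ρ₁ ≤ ρ₀) :
    -(3/8) * (Real.exp (L*T)
        + Real.exp (L*(T - t₁)) * (Real.exp (L*h) - 1) * (1 + L*h)^2 / (L*h)) * ρ₀
      + Real.exp (L*(T - t₁)) * (ρ₀/2) ≤ -(1/4) * ρ₀ := by
  set B := Real.exp (L*(T - t₁)) with hBdef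
  have hs : 0 < L * h := mul_pos hL hh
  have hB1 : 1 ≤ B := Real.one_le_exp (by nlinarith)
  have hBA : B ≤ Real.exp (L*T) := Real.exp_le_exp.mpr (by nlinarith)
  have hes : L*h + 1 ≤ Real.exp (L*h) := Real.add_one_le_exp _
  have hBpos : 0 < B := Real.exp_pos _
  have hC : B ≤ B * (Real.exp (L*h) - 1) * (1 + L*h)^2 / (L*h) := by
    rw [le_div_iff₀ hs]
    nlinarith [mul_nonneg (mul_nonneg hBpos.le (by nlinarith : (0:ℝ) ≤ Real.exp (L*h) - 1 - L*h)) (sq_nonneg (1 + L*h)),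
      mul_nonneg (mul_nonneg hBpos.le hs.le) (by nlinarith [sq_nonneg (L*h)] : (0:ℝ) ≤ (1 + L*h)^2 - 1)]
  nlinarith [mul_le_mul_of_nonneg_right hBA hρ₀.le, mul_le_mul_of_nonneg_right hC hρ₀.le,
    mul_le_mul_of_nonneg_right hB1 hρ₀.le]
end

section
/- Suppose a nonterminating subdivision process generates ρ-vectors with pairwise entry ratios in {4^ℓ : ℓ ∈ ℤ}, where each step either quarters ρ_0 or replaces some ρ_j (j ≥ 1) by two copies of ρ_j/4. Assume that from some step m̃ onward, the subdivided entry is never the minimal entry. Then the minimum value μ := min_j ρ_j^{(m̃)} stays constant for all m ≥ m̃, and the potential β(m) := log_4(ρ_0^{(m)}/μ) + Σ_{j=1}^{n_m} (2^{log_4(ρ_j^{(m)}/μ)} − 1) is a nonnegative integer that decreases by exactly 1 at each step; hence after finitely many steps all entries equal μ, yielding a contradiction. Consequently, the set of steps at which the minimal entry is subdivided is infinite. -/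
/-- One subdivision step at index j: for j = 0 the first entry is quartered,
and for j ≥ 1 the j-th entry is replaced by two copies of its quarter. -/
def SubdivStepAt (j : ℕ) (l l' : List ℝ) : Prop :=
  (j = 0 ∧ ∃ a t, l = a :: t ∧ l' = a/4 :: t) ∨
  (1 ≤ j ∧ ∃ (pre : List ℝ) (a : ℝ) (post : List ℝ),
      pre.length = j ∧ l = pre ++ a :: post ∧ l' = pre ++ a/4 :: a/4 :: post)

/-!
Suppose that from some step on the subdivided entry is never minimal. Then the minimum `μ` of
the list never changes, every entry is `μ * 4 ^ ℓ` with `ℓ ≥ 0`, and the natural number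
`ℓ₀ + ∑_{j ≥ 1} (2 ^ ℓⱼ - 1)` drops by exactly one at every step: quartering the head lowers
`ℓ₀` by one, and splitting a tail entry of level `ℓ + 1` into two of level `ℓ` replaces
`2 ^ (ℓ + 1) - 1` by `2 * (2 ^ ℓ - 1)`. A natural number cannot decrease forever.
-/

theorem List.exists_isLeast_of_ne_nil {α : Type*} [LinearOrder α] {l : List α} (hl : l ≠ []) :
    ∃ μ, IsLeast {b | b ∈ l} μ :=
  ⟨_, by simpa using l.toFinset.isLeast_min' ((List.toFinset_nonempty_iff l).2 hl)⟩

/-- The `ℓ ≥ 0` with `a = μ * 4 ^ ℓ`, when there is one. -/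
noncomputable def level (μ a : ℝ) : ℕ := (Int.log 4 (a / μ)).toNat

noncomputable def tailWeight (μ a : ℝ) : ℕ := 2 ^ level μ a - 1

noncomputable def potential (μ : ℝ) : List ℝ → ℕ
  | [] => 0
  | a :: t => level μ a + (t.map (tailWeight μ)).sum

section Level

variable {μ a : ℝ} {ℓ : ℤ}

theorem level_of_div_eq_zpow (h : a / μ = 4 ^ ℓ) : level μ a = ℓ.toNat := by
  rw [level, h]
  exact_mod_cast congrArg Int.toNat (Int.log_zpow (R := ℝ) (by norm_num : 1 < 4) ℓ)

theorem one_le_of_div_eq_zpow (hμ : 0 < μ) (hμa : μ < a) (h : a / μ = 4 ^ ℓ) : 1 ≤ ℓ :=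
  (one_lt_zpow_iff_right₀ (by norm_num : (1 : ℝ) < 4)).1 (h ▸ (one_lt_div hμ).2 hμa)

theorem div_four_div_eq_zpow (h : a / μ = 4 ^ ℓ) : a / 4 / μ = 4 ^ (ℓ - 1) := by
  rw [div_right_comm, h, zpow_sub_one₀ (by norm_num), div_eq_mul_inv]

theorem le_div_four_of_div_eq_zpow (hμ : 0 < μ) (hμa : μ < a) (h : a / μ = 4 ^ ℓ) :
    μ ≤ a / 4 := by
  rw [← one_le_div hμ, div_four_div_eq_zpow h]
  exact one_le_zpow₀ (by norm_num) (by linarith [one_le_of_div_eq_zpow hμ hμa h])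

theorem level_eq_level_div_four_add_one (hμ : 0 < μ) (hμa : μ < a) (h : a / μ = 4 ^ ℓ) :
    level μ a = level μ (a / 4) + 1 := by
  rw [level_of_div_eq_zpow h, level_of_div_eq_zpow (div_four_div_eq_zpow h)]
  have := one_le_of_div_eq_zpow hμ hμa h
  omega

end Level

namespace SubdivStepAt

variable {j : ℕ} {l l' : List ℝ} {μ a : ℝ}

theorem exists_getElem?_eq_some (hs : SubdivStepAt j l l') : ∃ a, l[j]? = some a := by
  rcases hs with ⟨rfl, a, t, rfl, -⟩ | ⟨-, pre, a, post, rfl, rfl, -⟩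
  · exact ⟨a, rfl⟩
  · exact ⟨a, by simp⟩

theorem shape (hs : SubdivStepAt j l l') (ha : l[j]? = some a) :
    (∃ t, l = a :: t ∧ l' = a/4 :: t) ∨
      ∃ c pre post, l = c :: pre ++ a :: post ∧ l' = c :: pre ++ a/4 :: a/4 :: post := by
  rcases hs with ⟨rfl, b, t, rfl, rfl⟩ | ⟨hj, pre, b, post, rfl, rfl, rfl⟩
  · obtain rfl : b = a := by simpa using ha
    exact Or.inl ⟨t, rfl, rfl⟩
  · obtain rfl : b = a := by simpa using ha
    obtain ⟨c, pre, rfl⟩ := List.exists_cons_of_length_pos hj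
    exact Or.inr ⟨c, pre, post, rfl, rfl⟩

theorem mem_of_mem_of_ne (hs : SubdivStepAt j l l') (ha : l[j]? = some a) {b : ℝ}
    (hb : b ∈ l) (hba : b ≠ a) : b ∈ l' := by
  rcases hs.shape ha with ⟨t, rfl, rfl⟩ | ⟨c, pre, post, rfl, rfl⟩ <;> simp at hb ⊢ <;> tauto

theorem mem_or_eq_of_mem (hs : SubdivStepAt j l l') (ha : l[j]? = some a) {b : ℝ}
    (hb : b ∈ l') : b ∈ l ∨ b = a / 4 := by
  rcases hs.shape ha with ⟨t, rfl, rfl⟩ | ⟨c, pre, post, rfl, rfl⟩ <;> simp at hb ⊢ <;> tauto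

theorem isLeast (hs : SubdivStepAt j l l') (ha : l[j]? = some a)
    (hμ : IsLeast {b | b ∈ l} μ) (hμa : μ ≠ a) (hquarter : μ ≤ a / 4) :
    IsLeast {b | b ∈ l'} μ := by
  refine ⟨hs.mem_of_mem_of_ne ha hμ.1 hμa, fun b hb => ?_⟩
  rcases hs.mem_or_eq_of_mem ha hb with hb | rfl
  exacts [hμ.2 hb, hquarter]

theorem potential_eq_add_one (hs : SubdivStepAt j l l') (ha : l[j]? = some a)
    (hlevel : level μ a = level μ (a / 4) + 1) : potential μ l = potential μ l' + 1 := by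
  have hweight : tailWeight μ a = 2 * tailWeight μ (a / 4) + 1 := by
    have := Nat.one_le_two_pow (n := level μ (a / 4))
    rw [tailWeight, tailWeight, hlevel, pow_succ]
    omega
  rcases hs.shape ha with ⟨t, rfl, rfl⟩ | ⟨c, pre, post, rfl, rfl⟩
  · simp only [potential, hlevel]
    omega
  · simp only [potential, List.cons_append, List.map_append, List.map_cons, List.sum_append,
      List.sum_cons, hweight]
    omega

theorem isLeast_and_potential_add_one (hs : SubdivStepAt j l l') (ha : l[j]? = some a)
    (hpos : 0 < μ) (hμ : IsLeast {b | b ∈ l} μ) (hratio : ∀ b ∈ l, ∃ ℓ : ℤ, b / μ = 4 ^ ℓ)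
    (hnotmin : ∃ b ∈ l, b < a) :
    IsLeast {b | b ∈ l'} μ ∧ potential μ l' + 1 = potential μ l := by
  obtain ⟨b, hb, hba⟩ := hnotmin
  have hμa : μ < a := (hμ.2 hb).trans_lt hba
  obtain ⟨ℓ, hℓ⟩ := hratio a (List.mem_of_getElem? ha)
  exact ⟨hs.isLeast ha hμ hμa.ne (le_div_four_of_div_eq_zpow hpos hμa hℓ),
    (hs.potential_eq_add_one ha (level_eq_level_div_four_add_one hpos hμa hℓ)).symm⟩

end SubdivStepAt

theorem exists_gt_min_entry_subdivided (ρ : ℕ → List ℝ) (k : ℕ → ℕ)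
    (hpos : ∀ m, ∀ a ∈ ρ m, (0:ℝ) < a)
    (hratio : ∀ m, ∀ a ∈ ρ m, ∀ b ∈ ρ m, ∃ ℓ : ℤ, a / b = (4:ℝ)^ℓ)
    (hstep : ∀ m, SubdivStepAt (k m) (ρ m) (ρ (m+1))) (N : ℕ) :
    ∃ m > N, ∃ a, (ρ m)[k m]? = some a ∧ ∀ b ∈ ρ m, a ≤ b := by
  by_contra! hnotmin
  obtain ⟨μ, hμ⟩ : ∃ μ, IsLeast {b | b ∈ ρ (N + 1)} μ := by
    obtain ⟨a, ha⟩ := (hstep (N + 1)).exists_getElem?_eq_some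
    exact List.exists_isLeast_of_ne_nil (List.ne_nil_of_mem (List.mem_of_getElem? ha))
  have descent : ∀ i, IsLeast {b | b ∈ ρ (N + 1 + i)} μ ∧
      potential μ (ρ (N + 1 + i)) + i = potential μ (ρ (N + 1)) := by
    intro i
    induction i with
    | zero => exact ⟨hμ, rfl⟩
    | succ i ih =>
      obtain ⟨a, ha⟩ := (hstep (N + 1 + i)).exists_getElem?_eq_some
      obtain ⟨hleast, hpot⟩ := (hstep (N + 1 + i)).isLeast_and_potential_add_one ha
        (hpos _ μ ih.1.1) ih.1 (fun b hb => hratio _ b hb μ ih.1.1) (hnotmin _ (by omega) a ha)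
      rw [← add_assoc]
      exact ⟨hleast, by omega⟩
  have := (descent (potential μ (ρ (N + 1)) + 1)).2
  omega

theorem min_entry_subdivided_infinitely_often_general (ρ : ℕ → List ℝ) (k : ℕ → ℕ)
    (hpos : ∀ m, ∀ a ∈ ρ m, (0:ℝ) < a)
    (hratio : ∀ m, ∀ a ∈ ρ m, ∀ b ∈ ρ m, ∃ ℓ : ℤ, a / b = (4:ℝ)^ℓ)
    (hstep : ∀ m, SubdivStepAt (k m) (ρ m) (ρ (m+1))) :
    Set.Infinite {m : ℕ | ∃ a, (ρ m)[k m]? = some a ∧ ∀ b ∈ ρ m, a ≤ b} :=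
  Set.infinite_of_forall_exists_gt fun N =>
    let ⟨m, hNm, hmin⟩ := exists_gt_min_entry_subdivided ρ k hpos hratio hstep N
    ⟨m, hmin, hNm⟩

theorem min_entry_subdivided_infinitely_often (ρ : ℕ → List ℝ) (k : ℕ → ℕ)
    (hne : ρ 0 ≠ [])
    (hpos : ∀ m, ∀ a ∈ ρ m, (0:ℝ) < a)
    (hratio : ∀ m, ∀ a ∈ ρ m, ∀ b ∈ ρ m, ∃ ℓ : ℤ, a / b = (4:ℝ)^ℓ)
    (hstep : ∀ m, SubdivStepAt (k m) (ρ m) (ρ (m+1))) :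
    Set.Infinite {m : ℕ | ∃ a, (ρ m)[k m]? = some a ∧ ∀ b ∈ ρ m, a ≤ b} :=
  min_entry_subdivided_infinitely_often_general ρ k hpos hratio hstep
end

section
/- Let F : ℝ^d → (nonempty compact convex sets) be L-Lipschitz in the Hausdorff metric (∞-norm). Let h, ρ > 0, α(h,ρ) = (1+Lh)ρ/2, and define Φ^α_{h,ρ}(x) = B_α(x + hF(x)) ∩ Δ_ρ. If M ⊂ Δ_ρ is nonempty and chain-connected with step ρ, and α ≥ α(h,ρ), then Φ^α_{h,ρ}(M) := ∪_{x∈M} Φ^α_{h,ρ}(x) is nonempty and chain-connected with step ρ. -/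
/-- Discretized Euler step: Φ^α_{h,ρ}(x) = B_α(x + hF(x)) ∩ Δ_ρ, extended to a set M. -/
def eulerImage (d : ℕ) (F : (Fin d → ℝ) → Set (Fin d → ℝ)) (h ρ α : ℝ)
    (M : Set (Fin d → ℝ)) : Set (Fin d → ℝ) :=
  ⋃ x ∈ M, {y | ∃ w ∈ F x, dist y (x + h • w) ≤ α} ∩ grid d ρ

/-!
The cell `Φ(x)` consists of the grid points within `α ≥ ρ / 2` of the convex set `x + hF(x)`, and
rounding a segment of that set to the grid connects the cell. For adjacent `x, x'` the Lipschitz bound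
gives points of `x + hF(x)` and `x' + hF(x')` at distance at most `(1 + Lh)ρ ≤ 2α`, and near them
there are adjacent grid points, one in each cell. Following a chain of `M` then links all cells.
-/

open Set Metric Relation

section Chains

variable {α : Type*}

theorem Relation.ReflTransGen.of_forall_lt {r : α → α → Prop} (p : ℕ → α) (N : ℕ)
    (h : ∀ j < N, r (p j) (p (j + 1))) : ReflTransGen r (p 0) (p N) := by
  induction N with
  | zero => exact .refl
  | succ N ih => exact (ih fun j hj => h j (by omega)).tail (h N N.lt_succ_self)

theorem Relation.ReflTransGen.of_chain_of_sets {r : α → α → Prop} (C : ℕ → Set α) (n : ℕ)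
    (hC : ∀ k ≤ n, ∀ p ∈ C k, ∀ q ∈ C k, ReflTransGen r p q)
    (hlink : ∀ k < n, ∃ p ∈ C k, ∃ q ∈ C (k + 1), ReflTransGen r p q) :
    ∀ p ∈ C 0, ∀ q ∈ C n, ReflTransGen r p q := by
  induction n with
  | zero => exact hC 0 le_rfl
  | succ n ih =>
    intro p hp q hq
    obtain ⟨g, hg, g', hg', hgg'⟩ := hlink n n.lt_succ_self
    exact (ih (fun k hk => hC k (by omega)) (fun k hk => hlink k (by omega)) p hp g hg).trans
      (hgg'.trans (hC (n + 1) le_rfl g' hg' q hq))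

end Chains

section CloseIn

variable {X : Type*} [PseudoMetricSpace X]

def CloseIn (S : Set X) (ρ : ℝ) (a b : X) : Prop := a ∈ S ∧ b ∈ S ∧ dist a b ≤ ρ

instance (S : Set X) (ρ : ℝ) : Std.Symm (CloseIn S ρ) where
  symm _ _ h := ⟨h.2.1, h.1, (dist_comm (α := X) _ _).trans_le h.2.2⟩

theorem CloseIn.mono {S T : Set X} {ρ : ℝ} (hST : S ⊆ T) : CloseIn S ρ ≤ CloseIn T ρ :=
  fun _ _ h => ⟨hST h.1, hST h.2.1, h.2.2⟩

end CloseIn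

section Grid

variable {d : ℕ} {ρ : ℝ}

theorem dist_eq_of_mem_grid (hρ : 0 < ρ) {a b : Fin d → ℝ} (ha : a ∈ grid d ρ)
    (hb : b ∈ grid d ρ) (hne : a ≠ b) (hle : dist a b ≤ ρ) : dist a b = ρ := by
  refine le_antisymm hle ?_
  obtain ⟨i, hi⟩ := Function.ne_iff.1 hne
  obtain ⟨k, hk⟩ := ha i
  obtain ⟨l, hl⟩ := hb i
  have hkl : (1 : ℝ) ≤ |(k : ℝ) - l| := by
    rw [← Int.cast_sub, ← Int.cast_abs]
    exact_mod_cast Int.one_le_abs (sub_ne_zero.2 fun h => hi (by rw [hk, hl, h]))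
  calc ρ ≤ ρ * |(k : ℝ) - l| := le_mul_of_one_le_right hρ.le hkl
    _ = dist (a i) (b i) := by rw [Real.dist_eq, hk, hl, ← mul_sub, abs_mul, abs_of_pos hρ]
    _ ≤ dist a b := dist_le_pi_dist a b i

/-- Repeated points are skipped; distinct grid points at distance `≤ ρ` are at distance `ρ`. -/
theorem exists_chain_of_reflTransGen (hρ : 0 < ρ) {S : Set (Fin d → ℝ)} (hS : S ⊆ grid d ρ)
    {x z : Fin d → ℝ} (hx : x ∈ S) (hxz : ReflTransGen (CloseIn S ρ) x z) :
    ∃ (n : ℕ) (y : ℕ → (Fin d → ℝ)), y 0 = x ∧ y n = z ∧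
      (∀ k ≤ n, y k ∈ S) ∧ ∀ k < n, dist (y (k + 1)) (y k) = ρ := by
  induction hxz with
  | refl => exact ⟨0, fun _ => x, rfl, rfl, fun _ _ => hx, fun _ hk => absurd hk (Nat.not_lt_zero _)⟩
  | @tail b c _ hbc ih =>
    obtain ⟨n, y, hy0, hyn, hyS, hyd⟩ := ih
    by_cases hcb : c = b
    · exact ⟨n, y, hy0, hyn.trans hcb.symm, hyS, hyd⟩
    refine ⟨n + 1, Function.update y (n + 1) c, ?_, by simp, fun k hk => ?_, fun k hk => ?_⟩
    · rw [Function.update_of_ne (by omega), hy0]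
    · rcases eq_or_ne k (n + 1) with rfl | hk'
      · simpa using hbc.2.1
      · rw [Function.update_of_ne hk']
        exact hyS k (by omega)
    · rw [Function.update_of_ne (by omega : k ≠ n + 1)]
      rcases eq_or_ne k n with rfl | hk'
      · rw [Function.update_self, hyn, dist_comm]
        exact dist_eq_of_mem_grid hρ (hS hbc.1) (hS hbc.2.1) (Ne.symm hcb) hbc.2.2
      · rw [Function.update_of_ne (by omega)]
        exact hyd k (by omega)

theorem chainConnected_of_reflTransGen (hρ : 0 < ρ) {S : Set (Fin d → ℝ)} (hS : S ⊆ grid d ρ)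
    (h : ∀ x ∈ S, ∀ z ∈ S, ReflTransGen (CloseIn S ρ) x z) : ChainConnected d ρ S :=
  fun x hx z hz => exists_chain_of_reflTransGen hρ hS hx (h x hx z hz)

end Grid

section Rounding

variable {d : ℕ} {ρ : ℝ}

theorem abs_round_sub_round_le_one {a b : ℝ} (h : |a - b| ≤ 1) :
    |(round a : ℝ) - round b| ≤ 1 := by
  have hmono : Monotone (round : ℝ → ℤ) := fun x y hxy => by
    simpa only [round_eq] using Int.floor_mono (by linarith : x + 1 / 2 ≤ y + 1 / 2)
  have key : ∀ {x y : ℝ}, x ≤ y → y ≤ x + 1 → round x ≤ round y ∧ round y ≤ round x + 1 :=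
    fun hxy hyx => ⟨hmono hxy, (hmono hyx).trans_eq (round_add_one _)⟩
  rw [← Int.cast_sub, ← Int.cast_abs, ← Int.cast_one, Int.cast_le, abs_le]
  rcases abs_le.1 h with ⟨h₁, h₂⟩
  rcases le_total a b with hab | hab
  · have := key hab (by linarith); omega
  · have := key hab (by linarith); omega

noncomputable def gridRound (ρ : ℝ) (y : Fin d → ℝ) : Fin d → ℝ := fun i => ρ * round (y i / ρ)

theorem gridRound_mem_grid (y : Fin d → ℝ) : gridRound ρ y ∈ grid d ρ :=
  fun i => ⟨round (y i / ρ), rfl⟩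

theorem gridRound_eq_self (hρ : ρ ≠ 0) {a : Fin d → ℝ} (ha : a ∈ grid d ρ) :
    gridRound ρ a = a := by
  funext i
  obtain ⟨k, hk⟩ := ha i
  simp [gridRound, hk, hρ]

theorem dist_gridRound_le (hρ : 0 < ρ) (y : Fin d → ℝ) : dist (gridRound ρ y) y ≤ ρ / 2 := by
  refine (dist_pi_le_iff (by positivity)).2 fun i => ?_
  have h := abs_sub_round (y i / ρ)
  calc dist (gridRound ρ y i) (y i) = ρ * |y i / ρ - round (y i / ρ)| := by
        rw [Real.dist_eq, abs_sub_comm, ← abs_of_pos hρ, ← abs_mul, abs_of_pos hρ, mul_sub,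
          mul_div_cancel₀ _ hρ.ne']
        rfl
    _ ≤ ρ * (1 / 2) := by gcongr
    _ = ρ / 2 := by ring

theorem dist_gridRound_le_of_dist_le (hρ : 0 < ρ) {y z : Fin d → ℝ} (h : dist y z ≤ ρ) :
    dist (gridRound ρ y) (gridRound ρ z) ≤ ρ := by
  refine (dist_pi_le_iff hρ.le).2 fun i => ?_
  have hyz : |y i / ρ - z i / ρ| ≤ 1 := by
    rw [← sub_div, abs_div, abs_of_pos hρ, div_le_one hρ, ← Real.dist_eq]
    exact (dist_le_pi_dist y z i).trans h
  calc dist (gridRound ρ y i) (gridRound ρ z i)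
      = ρ * |(round (y i / ρ) : ℝ) - round (z i / ρ)| := by
        rw [Real.dist_eq, gridRound, gridRound, ← mul_sub, abs_mul, abs_of_pos hρ]
    _ ≤ ρ * 1 := by gcongr; exact abs_round_sub_round_le_one hyz
    _ = ρ := mul_one ρ

theorem reflTransGen_gridRound_segment (hρ : 0 < ρ) {S : Set (Fin d → ℝ)} {u v : Fin d → ℝ}
    (hS : ∀ t ∈ Icc (0 : ℝ) 1, gridRound ρ (AffineMap.lineMap u v t) ∈ S) :
    ReflTransGen (CloseIn S ρ) (gridRound ρ u) (gridRound ρ v) := by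
  set N : ℕ := ⌈dist u v / ρ⌉₊ + 1
  have hN : (0 : ℝ) < N := by positivity
  have hmem : ∀ j ≤ N, (j / N : ℝ) ∈ Icc (0 : ℝ) 1 := fun j hj =>
    ⟨by positivity, div_le_one_of_le₀ (by exact_mod_cast hj) hN.le⟩
  have hstep : dist u v / N ≤ ρ := by
    rw [div_le_iff₀ hN, ← div_le_iff₀' hρ]
    exact (Nat.le_ceil _).trans (by simp [N])
  have := ReflTransGen.of_forall_lt (r := CloseIn S ρ)
    (fun j => gridRound ρ (AffineMap.lineMap u v (j / N : ℝ))) N fun j hj =>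
      ⟨hS _ (hmem j hj.le), hS _ (hmem (j + 1) hj), dist_gridRound_le_of_dist_le hρ (by
        rw [dist_lineMap_lineMap, Real.dist_eq, ← sub_div, abs_div, abs_of_pos hN]
        simpa [div_eq_inv_mul] using hstep)⟩
  simpa [hN.ne'] using this

end Rounding

section GridNbhd

variable {d : ℕ} {ρ α : ℝ}

/-- For `C = x + hF(x)` this is `Φ^α_{h,ρ}(x)`. -/
def gridNbhd (d : ℕ) (ρ α : ℝ) (C : Set (Fin d → ℝ)) : Set (Fin d → ℝ) :=
  {y | ∃ c ∈ C, dist y c ≤ α} ∩ grid d ρ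

theorem gridNbhd_subset_grid (C : Set (Fin d → ℝ)) : gridNbhd d ρ α C ⊆ grid d ρ :=
  inter_subset_right

theorem gridRound_mem_gridNbhd (hρ : 0 < ρ) (hα : ρ / 2 ≤ α) {C : Set (Fin d → ℝ)}
    {c : Fin d → ℝ} (hc : c ∈ C) : gridRound ρ c ∈ gridNbhd d ρ α C :=
  ⟨⟨c, hc, (dist_gridRound_le hρ c).trans hα⟩, gridRound_mem_grid c⟩

/-- Each coordinate of the rounded point lies between the corresponding coordinates of `a` and of
`gridRound ρ c`, since rounding is monotone and fixes the grid point `a`. -/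
theorem gridRound_lineMap_mem_gridNbhd (hρ : 0 < ρ) (hα : ρ / 2 ≤ α) {C : Set (Fin d → ℝ)}
    {a c : Fin d → ℝ} (ha : a ∈ grid d ρ) (hc : c ∈ C) (hac : dist a c ≤ α)
    {t : ℝ} (ht : t ∈ Icc (0 : ℝ) 1) :
    gridRound ρ (AffineMap.lineMap a c t) ∈ gridNbhd d ρ α C := by
  refine ⟨⟨c, hc, (dist_pi_le_iff (by linarith)).2 fun i => ?_⟩, gridRound_mem_grid _⟩
  set r : ℝ → ℝ := fun s => ρ * round (s / ρ)
  have hr : Monotone r := fun x y hxy => by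
    have : x / ρ ≤ y / ρ := div_le_div_of_nonneg_right hxy hρ.le
    simp only [r, round_eq]
    gcongr
  have hra : r (a i) = a i := congr_fun (gridRound_eq_self hρ.ne' ha) i
  have hend : a i ∈ closedBall (c i) α ∧ r (c i) ∈ closedBall (c i) α :=
    ⟨(dist_le_pi_dist a c i).trans hac,
      (dist_le_pi_dist (gridRound ρ c) c i).trans ((dist_gridRound_le hρ c).trans hα)⟩
  rw [Real.closedBall_eq_Icc] at hend
  have hseg : AffineMap.lineMap a c t i ∈ uIcc (a i) (c i) := by
    simpa [AffineMap.lineMap_apply_module] using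
      (convex_uIcc (a i) (c i)).lineMap_mem left_mem_uIcc right_mem_uIcc ht
  show r (AffineMap.lineMap a c t i) ∈ closedBall (c i) α
  rw [Real.closedBall_eq_Icc]
  exact uIcc_subset_Icc hend.1 hend.2 (hra ▸ hr.image_uIcc_subset (mem_image_of_mem r hseg))

/-- A grid point near `c₁ ∈ C` is joined to `gridRound ρ c₁`, which is joined to `gridRound ρ c₂`
along the rounded segment `[c₁, c₂] ⊆ C`. -/
theorem reflTransGen_of_mem_gridNbhd (hρ : 0 < ρ) (hα : ρ / 2 ≤ α) {C : Set (Fin d → ℝ)}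
    (hC : Convex ℝ C) {a b : Fin d → ℝ} (ha : a ∈ gridNbhd d ρ α C) (hb : b ∈ gridNbhd d ρ α C) :
    ReflTransGen (CloseIn (gridNbhd d ρ α C) ρ) a b := by
  have toRound : ∀ {a}, a ∈ gridNbhd d ρ α C → ∃ c ∈ C,
      ReflTransGen (CloseIn (gridNbhd d ρ α C) ρ) a (gridRound ρ c) := by
    rintro a ⟨⟨c, hc, hac⟩, ha⟩
    refine ⟨c, hc, ?_⟩
    simpa only [gridRound_eq_self hρ.ne' ha] using reflTransGen_gridRound_segment hρ
      fun t ht => gridRound_lineMap_mem_gridNbhd hρ hα ha hc hac ht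
  obtain ⟨c₁, hc₁, hac₁⟩ := toRound ha
  obtain ⟨c₂, hc₂, hbc₂⟩ := toRound hb
  have hc₁₂ := reflTransGen_gridRound_segment (S := gridNbhd d ρ α C) hρ
    fun t ht => gridRound_mem_gridNbhd hρ hα (hC.lineMap_mem hc₁ hc₂ ht)
  exact hac₁.trans (hc₁₂.trans (symm_of _ hbc₂))

end GridNbhd

section Crossing

variable {d : ℕ} {ρ α : ℝ}

theorem exists_close_int_multiples (hρ : 0 < ρ) (hα : ρ ≤ 2 * α) {u v : ℝ}
    (huv : |u - v| ≤ 2 * α) :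
    ∃ k l : ℤ, |ρ * k - u| ≤ α ∧ |ρ * l - v| ≤ α ∧ |ρ * k - ρ * l| ≤ ρ := by
  wlog huv' : u ≤ v generalizing u v
  · obtain ⟨k, l, hk, hl, hkl⟩ := this (by rwa [abs_sub_comm]) (le_of_not_ge huv')
    exact ⟨l, k, hl, hk, by rwa [abs_sub_comm]⟩
  have hvu : v - u ≤ 2 * α := by rw [abs_sub_comm] at huv; exact (le_abs_self _).trans huv
  -- `ρ k` is the largest grid point `≤ u + α`; if it is below `v - α`, then `ρ (k + 1)` is near `v`
  set k := ⌊(u + α) / ρ⌋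
  have hk₁ : ρ * k ≤ u + α := by
    have := mul_le_mul_of_nonneg_left (Int.floor_le ((u + α) / ρ)) hρ.le
    rwa [mul_div_cancel₀ _ hρ.ne'] at this
  have hk₂ : u + α < ρ * k + ρ := by
    have := mul_lt_mul_of_pos_left (Int.lt_floor_add_one ((u + α) / ρ)) hρ
    rwa [mul_div_cancel₀ _ hρ.ne', mul_add_one] at this
  have hku : |ρ * k - u| ≤ α := abs_le.2 ⟨by linarith, by linarith⟩
  by_cases hkv : v - α ≤ ρ * k
  · exact ⟨k, k, hku, abs_le.2 ⟨by linarith, by linarith⟩, by simpa using hρ.le⟩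
  · refine ⟨k, k + 1, hku, abs_le.2 ⟨by push_cast; linarith, by push_cast; linarith⟩, ?_⟩
    rw [Int.cast_add, Int.cast_one, mul_add_one, sub_add_cancel_left, abs_neg, abs_of_pos hρ]

theorem exists_dist_le_of_mem_gridNbhd (hρ : 0 < ρ) (hα : ρ ≤ 2 * α) {C C' : Set (Fin d → ℝ)}
    {u v : Fin d → ℝ} (hu : u ∈ C) (hv : v ∈ C') (huv : dist u v ≤ 2 * α) :
    ∃ g ∈ gridNbhd d ρ α C, ∃ g' ∈ gridNbhd d ρ α C', dist g g' ≤ ρ := by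
  choose k l hk hl hkl using fun i => exists_close_int_multiples hρ hα
    (((Real.dist_eq _ _).symm.trans_le (dist_le_pi_dist u v i)).trans huv)
  have hα₀ : 0 ≤ α := by linarith
  refine ⟨fun i => ρ * k i, ⟨⟨u, hu, ?_⟩, fun i => ⟨k i, rfl⟩⟩,
    fun i => ρ * l i, ⟨⟨v, hv, ?_⟩, fun i => ⟨l i, rfl⟩⟩, ?_⟩
  · exact (dist_pi_le_iff hα₀).2 fun i => (Real.dist_eq _ _).trans_le (hk i)
  · exact (dist_pi_le_iff hα₀).2 fun i => (Real.dist_eq _ _).trans_le (hl i)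
  · exact (dist_pi_le_iff hρ.le).2 fun i => (Real.dist_eq _ _).trans_le (hkl i)

theorem Metric.exists_dist_le_hausdorffDist {X : Type*} [PseudoMetricSpace X] {s t : Set X}
    {x : X} (hs : Bornology.IsBounded s) (ht : IsCompact t) (htne : t.Nonempty) (hx : x ∈ s) :
    ∃ y ∈ t, dist x y ≤ hausdorffDist s t := by
  obtain ⟨y, hy, hxy⟩ := ht.exists_infDist_eq_dist htne x
  exact ⟨y, hy, hxy ▸ infDist_le_hausdorffDist_of_mem hx
    (hausdorffEDist_ne_top_of_nonempty_of_bounded ⟨x, hx⟩ htne hs ht.isBounded)⟩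

end Crossing

section Euler

variable {d : ℕ} {L h ρ α : ℝ}

theorem eulerImage_eq_biUnion (F : (Fin d → ℝ) → Set (Fin d → ℝ)) (M : Set (Fin d → ℝ)) :
    eulerImage d F h ρ α M = ⋃ x ∈ M, gridNbhd d ρ α ((fun w => x + h • w) '' F x) := by
  simp [eulerImage, gridNbhd]

theorem exists_dist_le_of_hausdorffDist_le (hL : 0 ≤ L) (hh : 0 ≤ h) (hρ : 0 < ρ)
    (hα : (1 + L * h) * ρ / 2 ≤ α) {K K' : Set (Fin d → ℝ)} (hK : Bornology.IsBounded K)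
    (hKne : K.Nonempty) (hK' : IsCompact K') (hK'ne : K'.Nonempty) {x x' : Fin d → ℝ}
    (hKK' : hausdorffDist K K' ≤ L * dist x x') (hxx' : dist x x' ≤ ρ) :
    ∃ g ∈ gridNbhd d ρ α ((fun w => x + h • w) '' K),
      ∃ g' ∈ gridNbhd d ρ α ((fun w => x' + h • w) '' K'), dist g g' ≤ ρ := by
  obtain ⟨w, hw⟩ := hKne
  obtain ⟨w', hw', hww'⟩ := exists_dist_le_hausdorffDist hK hK' hK'ne hw
  have hLh := mul_nonneg hL hh
  refine exists_dist_le_of_mem_gridNbhd hρ (by nlinarith) (mem_image_of_mem _ hw)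
    (mem_image_of_mem _ hw') ?_
  calc dist (x + h • w) (x' + h • w') ≤ dist x x' + h * dist w w' := by
        simpa only [dist_smul₀, Real.norm_of_nonneg hh] using dist_add_add_le x (h • w) x' (h • w')
    _ ≤ ρ + h * (L * ρ) := by gcongr; exact hww'.trans (hKK'.trans (by gcongr))
    _ ≤ 2 * α := by nlinarith

end Euler

theorem euler_step_preserves_chainConnected_general (d : ℕ) (L h ρ α : ℝ)
    (hL : 0 ≤ L) (hh : 0 < h) (hρ : 0 < ρ)
    (F : (Fin d → ℝ) → Set (Fin d → ℝ))
    (hFne : ∀ x, (F x).Nonempty) (hFcpt : ∀ x, IsCompact (F x))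
    (hFconv : ∀ x, Convex ℝ (F x))
    (hFlip : ∀ x y, Metric.hausdorffDist (F x) (F y) ≤ L * dist x y)
    (hα : (1 + L*h) * ρ / 2 ≤ α)
    (M : Set (Fin d → ℝ)) (hMne : M.Nonempty)
    (hMcc : ChainConnected d ρ M) :
    (eulerImage d F h ρ α M).Nonempty ∧ ChainConnected d ρ (eulerImage d F h ρ α M) := by
  have hρα : ρ / 2 ≤ α := by nlinarith [mul_nonneg hL hh.le]
  set cell := fun x => gridNbhd d ρ α ((fun w => x + h • w) '' F x)
  rw [eulerImage_eq_biUnion]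
  refine ⟨?_, chainConnected_of_reflTransGen hρ (iUnion₂_subset fun _ _ => gridNbhd_subset_grid _) ?_⟩
  · obtain ⟨x, hx⟩ := hMne
    obtain ⟨w, hw⟩ := hFne x
    exact ⟨_, mem_biUnion hx (gridRound_mem_gridNbhd hρ hρα (mem_image_of_mem _ hw))⟩
  intro a ha b hb
  obtain ⟨x, hx, ha⟩ := mem_iUnion₂.1 ha
  obtain ⟨z, hz, hb⟩ := mem_iUnion₂.1 hb
  obtain ⟨n, c, rfl, rfl, hcM, hcd⟩ := hMcc x hx z hz
  refine ReflTransGen.of_chain_of_sets (fun k => cell (c k)) n (fun k hk p hp q hq => ?_)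
    (fun k hk => ?_) a ha b hb
  · exact ReflTransGen.mono (CloseIn.mono (subset_biUnion_of_mem (hcM k hk))) _ _
      (reflTransGen_of_mem_gridNbhd hρ hρα ((hFconv _).affinity _ _) hp hq)
  · obtain ⟨g, hg, g', hg', hgg'⟩ := exists_dist_le_of_hausdorffDist_le hL hh.le hρ hα
      (hFcpt _).isBounded (hFne _) (hFcpt _) (hFne _) (hFlip _ _) (dist_comm (c k) _ ▸ (hcd k hk).le)
    exact ⟨g, hg, g', hg', .single ⟨mem_biUnion (hcM k hk.le) hg,
      mem_biUnion (hcM (k + 1) hk) hg', hgg'⟩⟩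

theorem euler_step_preserves_chainConnected (d : ℕ) (L h ρ α : ℝ)
    (hL : 0 ≤ L) (hh : 0 < h) (hρ : 0 < ρ)
    (F : (Fin d → ℝ) → Set (Fin d → ℝ))
    (hFne : ∀ x, (F x).Nonempty) (hFcpt : ∀ x, IsCompact (F x))
    (hFconv : ∀ x, Convex ℝ (F x))
    (hFlip : ∀ x y, Metric.hausdorffDist (F x) (F y) ≤ L * dist x y)
    (hα : (1 + L*h) * ρ / 2 ≤ α)
    (M : Set (Fin d → ℝ)) (hM : M ⊆ grid d ρ) (hMne : M.Nonempty)
    (hMcc : ChainConnected d ρ M) :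
    (eulerImage d F h ρ α M).Nonempty ∧ ChainConnected d ρ (eulerImage d F h ρ α M) :=
  euler_step_preserves_chainConnected_general d L h ρ α hL hh hρ F hFne hFcpt hFconv hFlip hα M hMne
    hMcc
end
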